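/- For every p ∈ (0,1), the counterexample predictor M̃_p is (0,0)-CCA: for every prompt x ∈ {a,b,⊥}*, either M̃_p({s1}, x) credits s1 with probability 1, or the conditional distribution of M̃_p({s1}, x) given s1 not credited equals the distribution M̃_p(∅, x). -/

import Mathlib

open scoped ENNReal Classical

noncomputable section

namespace CCA

variable {α X D Y : Type*}

/-- Conditional probability of an event `E` given event `B`, for a set function `P`. -/
def prCond (P : Set α → ℝ≥0∞) (B : Set α) : Set α → ℝ≥0∞ := fun E => P (E ∩ B) / P B

/-- `(ε,δ)`-closeness of two set functions, as in differential privacy. -/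
def Close (ε δ : ℝ) (P Q : Set α → ℝ≥0∞) : Prop :=
  ∀ E : Set α,
    P E ≤ ENNReal.ofReal (Real.exp ε) * Q E + ENNReal.ofReal δ ∧
    Q E ≤ ENNReal.ofReal (Real.exp ε) * P E + ENNReal.ofReal δ

/-- `(ε,δ)`-counterfactual credit attribution for a kernel `K` mapping a dataset `S` and a
prompt `x` to a (sub)probability set function over (output, credit set) pairs: for every
prompt, dataset and `s ∈ S`, either `s` is credited with probability `1`, or the conditional
distribution given `s` not credited is `(ε,δ)`-close to the counterfactual on `S \ {s}`. -/
def IsCCA (ε δ : ℝ) (K : Set D → List X → Set (Y × Set D) → ℝ≥0∞) : Prop :=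
  ∀ (S : Set D) (x : List X) (s : D), s ∈ S →
    K S x {q | s ∈ q.2} = 1 ∨
    Close ε δ (prCond (K S x) {q | s ∉ q.2}) (K (S \ {s}) x)

/-- The event kernel associated with a PMF-valued crediting algorithm. -/
def pmfKernel (M : Set D → List X → PMF (Y × Set D)) :
    Set D → List X → Set (Y × Set D) → ℝ≥0∞ :=
  fun S x E => (M S x).toOuterMeasure E

/-- Coin flip: `true` with probability `min p 1`. -/
def coin (p : ℝ≥0∞) : PMF Bool := PMF.bernoulli (min p 1).toNNReal
  (by simpa using ENNReal.toNNReal_mono ENNReal.one_ne_top (min_le_right p 1))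

/-- Two-point distribution: `x` with probability `p` (clipped at `1`), else `y`. -/
def twoPoint (p : ℝ≥0∞) (x y : α) : PMF α := PMF.map (fun b => if b then x else y) (coin p)

/-- The token alphabet `{a, b, ⊥}` of the counterexample predictor. -/
inductive Tok : Type
  | a : Tok
  | b : Tok
  | bot : Tok
deriving DecidableEq

/-- The counterexample crediting next-token predictor `M̃_p`, over the data universe
`Unit = {s1}` (datasets and credit sets are `Set Unit`, with `{()} = {s1}`). -/
def Mp (p : ℝ) (S : Set Unit) (x : List Tok) : PMF (Tok × Set Unit) :=
  if x = [] then twoPoint (ENNReal.ofReal p) (Tok.a, (∅ : Set Unit)) (Tok.b, ∅)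
  else if x = [Tok.a] then
    if S = ∅ then PMF.pure (Tok.b, ∅)
    else twoPoint (1 / 2) (Tok.a, Set.univ) (Tok.b, ∅)
  else if x = [Tok.b] then
    if S = ∅ then PMF.pure (Tok.a, ∅) else PMF.pure (Tok.a, Set.univ)
  else PMF.pure (Tok.bot, ∅)

/-! On the prompt `a`, conditioning the fair coin between `(a, {s1})` and `(b, ∅)` on `s1` not
being credited leaves the point mass at `(b, ∅)`, which is exactly `M̃_p(∅, a)`. On the prompt
`b` the datum is credited surely, and on every other prompt the two runs coincide and never
credit, so conditioning changes nothing. -/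

lemma toOuterMeasure_twoPoint (q : ℝ≥0∞) (x y : α) (E : Set α) :
    (twoPoint q x y).toOuterMeasure E =
      (if x ∈ E then min q 1 else 0) + (if y ∈ E then 1 - min q 1 else 0) := by
  rw [twoPoint, PMF.toOuterMeasure_map_apply, PMF.toOuterMeasure_apply, tsum_bool]
  have hmin : (((min q 1).toNNReal : NNReal) : ℝ≥0∞) = min q 1 :=
    ENNReal.coe_toNNReal (ne_top_of_le_ne_top ENNReal.one_ne_top (min_le_right _ _))
  have hcoin : ∀ b, coin q b = cond b (min q 1) (1 - min q 1) := by
    intro b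
    refine (PMF.bernoulli_apply _ b).trans ?_
    cases b <;> simp [hmin, ENNReal.coe_sub]
  simp [Set.indicator, hcoin, add_comm]

lemma support_twoPoint_subset (q : ℝ≥0∞) (x y : α) :
    (twoPoint q x y).support ⊆ {x, y} := by
  rw [twoPoint, PMF.support_map]
  rintro a ⟨b, -, rfl⟩
  cases b <;> simp

lemma prCond_toOuterMeasure_of_support_subset (P : PMF α) {B : Set α} (h : P.support ⊆ B)
    (E : Set α) : prCond P.toOuterMeasure B E = P.toOuterMeasure E := by
  have hB : P.toOuterMeasure B = 1 := (PMF.toOuterMeasure_apply_eq_one_iff P B).2 h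
  have hEB : P.toOuterMeasure (E ∩ B) = P.toOuterMeasure E := by
    refine le_antisymm (P.toOuterMeasure.mono Set.inter_subset_left) ?_
    calc P.toOuterMeasure E = P.toOuterMeasure (E ∩ P.support) :=
          (PMF.toOuterMeasure_apply_inter_support P E).symm
      _ ≤ P.toOuterMeasure (E ∩ B) :=
          P.toOuterMeasure.mono (Set.inter_subset_inter_right E h)
  simp [prCond, hEB, hB]

lemma prCond_toOuterMeasure_twoPoint {q : ℝ≥0∞} (hq : q < 1) {x y : α} {B : Set α}
    (hx : x ∉ B) (hy : y ∈ B) (E : Set α) :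
    prCond (twoPoint q x y).toOuterMeasure B E = (PMF.pure y).toOuterMeasure E := by
  have hpos : 1 - min q 1 ≠ 0 := by
    rw [min_eq_left hq.le]
    exact (tsub_pos_of_lt hq).ne'
  have hfin : 1 - min q 1 ≠ ∞ := ENNReal.sub_ne_top ENNReal.one_ne_top
  by_cases hyE : y ∈ E
  · simp [prCond, toOuterMeasure_twoPoint, hx, hy, hyE, ENNReal.div_self hpos hfin]
  · simp [prCond, toOuterMeasure_twoPoint, hx, hy, hyE]

lemma close_zero_zero_self (P : Set α → ℝ≥0∞) : Close 0 0 P P := fun E => by simp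

lemma pmfKernel_eq (M : Set D → List X → PMF (Y × Set D)) (S : Set D)
    (x : List X) : pmfKernel M S x = (M S x).toOuterMeasure := rfl

lemma credit_eq_empty_of_mem_support_Mp_empty (p : ℝ) (x : List Tok) {q : Tok × Set Unit}
    (hq : q ∈ (Mp p ∅ x).support) : q.2 = ∅ := by
  unfold Mp at hq
  split_ifs at hq
  · rcases support_twoPoint_subset _ _ _ hq with rfl | rfl <;> rfl
  all_goals simp_all

lemma Mp_singleton_of_ne (p : ℝ) {x : List Tok} (ha : x ≠ [Tok.a]) (hb : x ≠ [Tok.b]) :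
    Mp p {()} x = Mp p ∅ x := by
  simp [Mp, ha, hb]

lemma Mp_credits_or_prCond_eq (p : ℝ) (x : List Tok) :
    (Mp p {()} x).toOuterMeasure {q : Tok × Set Unit | () ∈ q.2} = 1 ∨
    ∀ E : Set (Tok × Set Unit),
      prCond (pmfKernel (Mp p) {()} x) {q | () ∉ q.2} E =
        (Mp p ∅ x).toOuterMeasure E := by
  by_cases ha : x = [Tok.a]
  · right
    have hS : Mp p {()} x = twoPoint (1 / 2) (Tok.a, Set.univ) (Tok.b, ∅) := by simp [Mp, ha]
    have hE : Mp p ∅ x = PMF.pure (Tok.b, ∅) := by simp [Mp, ha]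
    have hhalf : (1 / 2 : ℝ≥0∞) < 1 := ENNReal.half_lt_self one_ne_zero ENNReal.one_ne_top
    rw [pmfKernel_eq, hS, hE]
    exact prCond_toOuterMeasure_twoPoint hhalf (by simp) (by simp)
  by_cases hb : x = [Tok.b]
  · left
    simp [Mp, hb]
  · right
    intro E
    rw [pmfKernel_eq, Mp_singleton_of_ne p ha hb]
    refine prCond_toOuterMeasure_of_support_subset _ (fun q hq => ?_) E
    simp [credit_eq_empty_of_mem_support_Mp_empty p x hq]

theorem stmt1_general (p : ℝ) :
    IsCCA 0 0 (pmfKernel (Mp p)) ∧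
    ∀ x : List Tok,
      (Mp p {()} x).toOuterMeasure {q : Tok × Set Unit | () ∈ q.2} = 1 ∨
      ∀ E : Set (Tok × Set Unit),
        prCond (pmfKernel (Mp p) {()} x) {q | () ∉ q.2} E =
          (Mp p ∅ x).toOuterMeasure E := by
  refine ⟨fun S x s hs => ?_, Mp_credits_or_prCond_eq p⟩
  obtain rfl : S = {()} := Set.eq_singleton_iff_unique_mem.2 ⟨hs, fun _ _ => rfl⟩
  rw [Set.sdiff_self]
  refine (Mp_credits_or_prCond_eq p x).imp id fun hcond => ?_
  rw [show prCond (pmfKernel (Mp p) {()} x) {q | s ∉ q.2} = pmfKernel (Mp p) ∅ x from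
    funext hcond]
  exact close_zero_zero_self _

/-- The counterexample predictor `M̃_p` is `(0,0)`-CCA: for every prompt, it either credits
`s1` with probability `1`, or the conditional distribution given `s1` not credited equals
the counterfactual distribution `M̃_p(∅, x)`. -/
theorem stmt1 (p : ℝ) (hp0 : 0 < p) (hp1 : p < 1) :
    IsCCA 0 0 (pmfKernel (Mp p)) ∧
    ∀ x : List Tok,
      (Mp p {()} x).toOuterMeasure {q : Tok × Set Unit | () ∈ q.2} = 1 ∨
      ∀ E : Set (Tok × Set Unit),
        prCond (pmfKernel (Mp p) {()} x) {q | () ∉ q.2} E =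
          (Mp p ∅ x).toOuterMeasure E :=
  stmt1_general p

end CCA
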